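/- Let n ≥ 0 be an integer and λ ∈ ℚ. Then the greatest rational number r with r < λ (strictly) and denominator (in lowest terms) at most n+1 is: λ − 1/(n+1) if λ ∈ ℤ; and a + max_{1 ≤ d ≤ n+1} ( ⌊(cd−1)/b⌋ / d ) otherwise, where λ = a + c/b with a = ⌊λ⌋, 0 < c < b, gcd(c,b) = 1. -/

import Mathlib

/-!
A rational with denominator dividing `d` is `m / d` for an integer `m`, and `m / d < a / b` iff
`m * b ≤ a * d - 1`; so the greatest such rational below `a / b` is `⌊(a d - 1) / b⌋ / d`.
Rationals with denominator at most `N` are those with denominator dividing some `d ≤ N`, so the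
answer is the largest of these per-denominator maxima. Translating by the integer `⌊q⌋` preserves
denominators, which reduces the general case to `Int.fract q`; for an integer `k` the
per-denominator maxima are `k - 1 / d`, largest at `d = n + 1`.
-/

theorem Finset.isGreatest_biUnion_max'_image {α ι : Type*} [LinearOrder α] {s : Finset ι}
    (hs : s.Nonempty) {S : ι → Set α} {g : ι → α} (h : ∀ i ∈ s, IsGreatest (S i) (g i)) :
    IsGreatest (⋃ i ∈ s, S i) ((s.image g).max' (hs.image g)) := by
  constructor
  · obtain ⟨j, hj, hgj⟩ := mem_image.1 (max'_mem _ (hs.image g))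
    rw [← hgj]
    exact Set.mem_biUnion hj (h j hj).1
  · simp only [mem_upperBounds, Set.mem_iUnion]
    rintro x ⟨i, hi, hx⟩
    exact ((h i hi).2 hx).trans (le_max' _ _ (mem_image_of_mem g hi))

namespace Rat

theorem exists_eq_intCast_div_of_den_dvd {r : ℚ} {d : ℕ} (hd : d ≠ 0) (h : r.den ∣ d) :
    ∃ m : ℤ, r = m / d := by
  obtain ⟨e, rfl⟩ := h
  have he : (e : ℚ) ≠ 0 := by exact_mod_cast right_ne_zero_of_mul hd
  refine ⟨r.num * e, ?_⟩
  rw [Int.cast_mul, ← mul_den_eq_num, Nat.cast_mul, Int.cast_natCast]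
  field_simp

theorem den_intCast_div_natCast_dvd (m : ℤ) (d : ℕ) : ((m : ℚ) / d).den ∣ d := by
  have h := den_dvd m d
  rw [divInt_eq_div] at h
  exact_mod_cast h

theorem intCast_div_lt_intCast_div_iff_le_floor (m a : ℤ) {b d : ℕ} (hb : 0 < b) (hd : 0 < d) :
    (m : ℚ) / d < a / b ↔ m ≤ ⌊((a : ℚ) * d - 1) / b⌋ := by
  have hb' : (0 : ℚ) < b := by exact_mod_cast hb
  have hd' : (0 : ℚ) < d := by exact_mod_cast hd
  rw [div_lt_div_iff₀ hd' hb', Int.le_floor, le_div_iff₀ hb']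
  norm_cast
  omega

theorem isGreatest_lt_intCast_div_den_dvd (a : ℤ) {b d : ℕ} (hb : 0 < b) (hd : 0 < d) :
    IsGreatest {r : ℚ | r < a / b ∧ r.den ∣ d} (⌊((a : ℚ) * d - 1) / b⌋ / d) := by
  refine ⟨⟨(intCast_div_lt_intCast_div_iff_le_floor _ a hb hd).2 le_rfl,
    den_intCast_div_natCast_dvd _ _⟩, ?_⟩
  rintro r ⟨hr, hrd⟩
  obtain ⟨m, rfl⟩ := exists_eq_intCast_div_of_den_dvd hd.ne' hrd
  gcongr
  exact_mod_cast (intCast_div_lt_intCast_div_iff_le_floor m a hb hd).1 hr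

theorem setOf_lt_den_le_eq_biUnion (x : ℚ) (N : ℕ) :
    {r : ℚ | r < x ∧ r.den ≤ N} = ⋃ d ∈ Finset.Icc 1 N, {r : ℚ | r < x ∧ r.den ∣ d} := by
  ext r
  simp only [Set.mem_ofPred_eq, Set.mem_iUnion, Finset.mem_Icc, exists_prop]
  constructor
  · rintro ⟨hr, hN⟩
    exact ⟨r.den, ⟨r.pos, hN⟩, hr, dvd_rfl⟩
  · rintro ⟨d, ⟨hd, hN⟩, hr, hdvd⟩
    exact ⟨hr, (Nat.le_of_dvd hd hdvd).trans hN⟩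

theorem isGreatest_lt_den_le_intCast_add {x y : ℚ} {N : ℕ} (k : ℤ)
    (h : IsGreatest {r : ℚ | r < x ∧ r.den ≤ N} y) :
    IsGreatest {r : ℚ | r < k + x ∧ r.den ≤ N} (k + y) := by
  refine ⟨⟨by linarith [h.1.1], by rw [intCast_add_den]; exact h.1.2⟩, ?_⟩
  rintro r ⟨hr, hN⟩
  have : r - k ≤ y := h.2 ⟨by linarith, by rwa [sub_intCast_den]⟩
  linarith

theorem isGreatest_lt_intCast_den_le (k : ℤ) (n : ℕ) :
    IsGreatest {r : ℚ | r < k ∧ r.den ≤ n + 1} (k - 1 / ((n : ℚ) + 1)) := by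
  have hS : ∀ d : ℕ, 0 < d → IsGreatest {r : ℚ | r < k ∧ r.den ∣ d} (k - 1 / d) := by
    intro d hd
    have hd' : (d : ℚ) ≠ 0 := by positivity
    convert isGreatest_lt_intCast_div_den_dvd k one_pos hd using 2
    · simp
    · rw [Nat.cast_one, div_one, ← Int.cast_natCast, ← Int.cast_mul, ← Int.cast_one,
        ← Int.cast_sub, Int.floor_intCast]
      push_cast
      field_simp
  refine ⟨?_, ?_⟩
  · obtain ⟨hlt, hdvd⟩ := (hS (n + 1) n.succ_pos).1
    push_cast at hlt hdvd
    exact ⟨hlt, Nat.le_of_dvd n.succ_pos hdvd⟩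
  · rintro r ⟨hr, hN⟩
    calc r ≤ k - 1 / r.den := (hS r.den r.pos).2 ⟨hr, dvd_rfl⟩
      _ ≤ k - 1 / ((n : ℚ) + 1) := by
        gcongr
        exact_mod_cast hN

end Rat

theorem stmt16 (n : ℕ) (q : ℚ) :
    IsGreatest {r : ℚ | r < q ∧ r.den ≤ n + 1}
      (if q.den = 1 then q - 1 / ((n : ℚ) + 1)
       else (⌊q⌋ : ℚ) +
        ((Finset.Icc 1 (n + 1)).image fun d : ℕ =>
            ((⌊(((Int.fract q).num : ℚ) * (d : ℚ) - 1) / (q.den : ℚ)⌋ : ℚ) / (d : ℚ))).max'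
          ((Finset.nonempty_Icc.mpr (by omega)).image _)) := by
  split_ifs with hq
  · rw [← Rat.coe_int_num_of_den_eq_one hq]
    exact Rat.isGreatest_lt_intCast_den_le q.num n
  · have hfract : Int.fract q = (Int.fract q).num / q.den := by
      rw [← Rat.den_intFract, Rat.num_div_den]
    have hmax :=
      Finset.isGreatest_biUnion_max'_image (Finset.nonempty_Icc.mpr (Nat.le_add_left 1 n)) fun d hd =>
        Rat.isGreatest_lt_intCast_div_den_dvd (Int.fract q).num q.pos
          (Finset.mem_Icc.1 hd).1
    rw [← hfract, ← Rat.setOf_lt_den_le_eq_biUnion] at hmax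
    simpa only [Int.floor_add_fract] using Rat.isGreatest_lt_den_le_intCast_add ⌊q⌋ hmax
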